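/- arXiv:1512.07128 — 4 statements merged into one kernel-verified Lean document; each statement's English description precedes it below -/
import Mathlib

section
/- Let s, t ∈ ℝ and set u := s + τt/2 + τ/6. Then the following absolutely convergent series identities hold: ∑_{k∈ℤ} e^{2πi(3k)s} · e^{πiτ(6k+1+3t)²/12} = e^{πiτ(1+3t)²/12} · a(u), ∑_{k∈ℤ} e^{2πi(3k+2)s} · e^{πiτ(6k+5+3t)²/12} = e^{πiτ(1+3t)²/12} · b(u), and ∑_{k∈ℤ} e^{2πi(3k+1)s} · e^{πiτ(6k+3+3t)²/12} = e^{πiτ(1+3t)²/12} · c(u). (Thus the coefficients of the weak Maurer–Cartan relations of the deformed Seidel Lagrangian in ℙ¹_{3,3,3}, after a common normalization, are the theta functions a, b, c in the holomorphic coordinate u.) -/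
/-!
Write `m = 3k + j`. Completing the square,
`(2m + 1 + 3t)² / 12 = m² / 3 + m (1 + 3t) / 3 + (1 + 3t)² / 12`, and the linear term
`πiτ m (1 + 3t) / 3` together with the phase `2πi m s` is exactly `2πi m u`. So the
identities hold term by term, and pulling the constant factor out of the sum needs no
convergence (`tsum_mul_left` holds unconditionally in a field).
-/

open Complex

noncomputable def Theta (τ u : ℂ) (j : ℤ) : ℂ :=
  ∑' k : ℤ, Complex.exp (Real.pi * I * τ * (3 * (k : ℂ) + (j : ℂ)) ^ 2 / 3
      + 2 * Real.pi * I * (3 * (k : ℂ) + (j : ℂ)) * u)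

theorem exp_phase_mul_exp_sq_eq (τ s t m : ℂ) :
    exp (2 * Real.pi * I * m * s) * exp (Real.pi * I * τ * (2 * m + 1 + 3 * t) ^ 2 / 12)
      = exp (Real.pi * I * τ * (1 + 3 * t) ^ 2 / 12) *
        exp (Real.pi * I * τ * m ^ 2 / 3 + 2 * Real.pi * I * m * (s + τ * t / 2 + τ / 6)) := by
  rw [← exp_add, ← exp_add]
  ring_nf

theorem tsum_exp_phase_mul_exp_sq_eq_Theta (τ s t : ℂ) (j : ℤ) :
    ∑' k : ℤ, exp (2 * Real.pi * I * (3 * k + j) * s) *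
        exp (Real.pi * I * τ * (2 * (3 * k + j) + 1 + 3 * t) ^ 2 / 12)
      = exp (Real.pi * I * τ * (1 + 3 * t) ^ 2 / 12) * Theta τ (s + τ * t / 2 + τ / 6) j := by
  rw [Theta, ← tsum_mul_left]
  exact tsum_congr fun k => exp_phase_mul_exp_sq_eq τ s t _

theorem mc_coefficients_are_theta_general (τ : ℂ) (s t : ℝ) (u : ℂ)
    (hu : u = (s : ℂ) + τ * (t : ℂ) / 2 + τ / 6) :
    (∑' k : ℤ, Complex.exp (2 * Real.pi * I * (3 * (k : ℂ)) * (s : ℂ)) *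
        Complex.exp (Real.pi * I * τ * (6 * (k : ℂ) + 1 + 3 * (t : ℂ)) ^ 2 / 12)
      = Complex.exp (Real.pi * I * τ * (1 + 3 * (t : ℂ)) ^ 2 / 12) * Theta τ u 0) ∧
    (∑' k : ℤ, Complex.exp (2 * Real.pi * I * (3 * (k : ℂ) + 2) * (s : ℂ)) *
        Complex.exp (Real.pi * I * τ * (6 * (k : ℂ) + 5 + 3 * (t : ℂ)) ^ 2 / 12)
      = Complex.exp (Real.pi * I * τ * (1 + 3 * (t : ℂ)) ^ 2 / 12) * Theta τ u 2) ∧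
    (∑' k : ℤ, Complex.exp (2 * Real.pi * I * (3 * (k : ℂ) + 1) * (s : ℂ)) *
        Complex.exp (Real.pi * I * τ * (6 * (k : ℂ) + 3 + 3 * (t : ℂ)) ^ 2 / 12)
      = Complex.exp (Real.pi * I * τ * (1 + 3 * (t : ℂ)) ^ 2 / 12) * Theta τ u 1) := by
  subst hu
  refine ⟨?_, ?_, ?_⟩ <;>
  · rw [← tsum_exp_phase_mul_exp_sq_eq_Theta]
    refine tsum_congr fun k => ?_
    push_cast
    ring_nf

/-- for `s, t ∈ ℝ` and `u = s + τt/2 + τ/6`, the coefficients of the weak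
Maurer–Cartan relations of the deformed Seidel Lagrangian in `ℙ¹_{3,3,3}`, after a
common normalization, are the theta functions `a, b, c` in the coordinate `u`:
`∑_{k∈ℤ} e^{2πi(3k)s} e^{πiτ(6k+1+3t)²/12} = e^{πiτ(1+3t)²/12} a(u)`, and similarly
for `b` and `c`. -/
theorem mc_coefficients_are_theta (τ : ℂ) (hτ : 0 < τ.im) (s t : ℝ) (u : ℂ)
    (hu : u = (s : ℂ) + τ * (t : ℂ) / 2 + τ / 6) :
    (∑' k : ℤ, Complex.exp (2 * Real.pi * I * (3 * (k : ℂ)) * (s : ℂ)) *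
        Complex.exp (Real.pi * I * τ * (6 * (k : ℂ) + 1 + 3 * (t : ℂ)) ^ 2 / 12)
      = Complex.exp (Real.pi * I * τ * (1 + 3 * (t : ℂ)) ^ 2 / 12) * Theta τ u 0) ∧
    (∑' k : ℤ, Complex.exp (2 * Real.pi * I * (3 * (k : ℂ) + 2) * (s : ℂ)) *
        Complex.exp (Real.pi * I * τ * (6 * (k : ℂ) + 5 + 3 * (t : ℂ)) ^ 2 / 12)
      = Complex.exp (Real.pi * I * τ * (1 + 3 * (t : ℂ)) ^ 2 / 12) * Theta τ u 2) ∧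
    (∑' k : ℤ, Complex.exp (2 * Real.pi * I * (3 * (k : ℂ) + 1) * (s : ℂ)) *
        Complex.exp (Real.pi * I * τ * (6 * (k : ℂ) + 3 + 3 * (t : ℂ)) ^ 2 / 12)
      = Complex.exp (Real.pi * I * τ * (1 + 3 * (t : ℂ)) ^ 2 / 12) * Theta τ u 1) :=
  mc_coefficients_are_theta_general τ s t u hu
end

section
/- At the point u₀ := 1/2 + τ/6 one has c(u₀) = 0 and a(u₀) + b(u₀) = 0. (This is the commutative point of the family: at u = u₀ the Sklyanin relations a(u)·xy + b(u)·yx + c(u)·z², a(u)·yz + b(u)·zy + c(u)·x², a(u)·zx + b(u)·xz + c(u)·y² reduce, up to the nonzero scalar a(u₀), to the commutativity relations of the polynomial ring ℂ[x,y,z].) -/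
/-!
The reflection `m ↦ -1 - m` of `ℤ` maps the class `j` mod 3 onto the class `2 - j`, and at
`u₀ = 1/2 + τ/6` it multiplies each term `exp(πiτm²/3 + 2πimu₀)` by `exp(-πi(2m+1)) = -1`.
Hence `Θ_{2-j}(u₀) = -Θ_j(u₀)`: for `j = 1` this forces `c(u₀) = 0`, for `j = 0` it is
`b(u₀) = -a(u₀)`.
-/

open Complex

noncomputable def thetaTerm (τ u m : ℂ) : ℂ :=
  exp (Real.pi * I * τ * m ^ 2 / 3 + 2 * Real.pi * I * m * u)

lemma Theta_eq_tsum_thetaTerm (τ u : ℂ) (j : ℤ) :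
    Theta τ u j = ∑' k : ℤ, thetaTerm τ u (3 * k + j) := rfl

lemma thetaTerm_neg_sub_one (τ : ℂ) (m : ℤ) :
    thetaTerm τ (1 / 2 + τ / 6) (-1 - m) = -thetaTerm τ (1 / 2 + τ / 6) m := by
  have hexponent :
      Real.pi * I * τ * (-1 - m) ^ 2 / 3 + 2 * Real.pi * I * (-1 - m) * (1 / 2 + τ / 6) =
        (Real.pi * I * τ * m ^ 2 / 3 + 2 * Real.pi * I * m * (1 / 2 + τ / 6))
        + Real.pi * I + ((-m - 1 : ℤ) : ℂ) * (2 * Real.pi * I) := by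
    push_cast
    ring
  rw [thetaTerm, thetaTerm, hexponent, exp_add, exp_add, exp_pi_mul_I,
    exp_int_mul_two_pi_mul_I]
  ring

lemma Theta_two_sub (τ : ℂ) (j : ℤ) :
    Theta τ (1 / 2 + τ / 6) (2 - j) = -Theta τ (1 / 2 + τ / 6) j := by
  rw [Theta_eq_tsum_thetaTerm, Theta_eq_tsum_thetaTerm, ← tsum_neg,
    ← (Equiv.subLeft (-1 : ℤ)).tsum_eq]
  refine tsum_congr fun k => ?_
  have hreflect :
      3 * ((-1 - k : ℤ) : ℂ) + ((2 - j : ℤ) : ℂ) = -1 - ((3 * k + j : ℤ) : ℂ) := by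
    push_cast
    ring
  rw [Equiv.subLeft_apply, hreflect, thetaTerm_neg_sub_one]
  push_cast
  rfl

theorem theta_commutative_point_general (τ : ℂ) :
    Theta τ (1 / 2 + τ / 6) 1 = 0 ∧
    Theta τ (1 / 2 + τ / 6) 0 + Theta τ (1 / 2 + τ / 6) 2 = 0 := by
  have hc := Theta_two_sub τ 1
  have hab := Theta_two_sub τ 0
  norm_num at hc hab
  constructor
  · linear_combination hc / 2
  · linear_combination hab

/-- at the commutative point `u₀ = 1/2 + τ/6` one has `c(u₀) = 0` and
`a(u₀) + b(u₀) = 0`, so the Sklyanin relations reduce (up to the nonzero scalar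
`a(u₀)`) to the commutativity relations of `ℂ[x,y,z]`. -/
theorem theta_commutative_point (τ : ℂ) (hτ : 0 < τ.im) :
    Theta τ (1 / 2 + τ / 6) 1 = 0 ∧
    Theta τ (1 / 2 + τ / 6) 0 + Theta τ (1 / 2 + τ / 6) 2 = 0 :=
  theta_commutative_point_general τ
end

section
/- In the algebra A₀, the element W^punc := xyzw + wzyx is central: W^punc·r = r·W^punc for every r ∈ A₀. (W^punc is the worldsheet superpotential of the generalized mirror of the 4-punctured sphere ℙ¹ − {p₁,p₂,p₃,p₄} constructed from the two Seidel-type Lagrangian circles, and A₀ is a noncommutative crepant resolution of the conifold.) -/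
open Complex

/-- Generators `e₁ = g 0`, `e₂ = g 1`, `x = g 2`, `y = g 3`, `z = g 4`, `w = g 5`
of the free noncommutative unital `ℂ`-algebra on six generators. -/
noncomputable def g (i : Fin 6) : FreeAlgebra ℂ (Fin 6) := FreeAlgebra.ι ℂ i

/-- The defining relations of the quiver algebra `A₀` (the noncommutative crepant
resolution of the conifold): `e₁ + e₂ = 1`, `e₁e₂ = e₂e₁ = 0`, `e₁² = e₁`,
`e₂² = e₂`, `x = e₁xe₂`, `z = e₁ze₂`, `y = e₂ye₁`, `w = e₂we₁`, together with the
cyclic-derivative relations `xyz = zyx`, `yzw = wzy`, `zwx = xwz`, `wxy = yxw` of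
the potential `Φ₀ = xyzw − wzyx`. -/
inductive ConifoldRel : FreeAlgebra ℂ (Fin 6) → FreeAlgebra ℂ (Fin 6) → Prop
  | unit : ConifoldRel (g 0 + g 1) 1
  | orth₁ : ConifoldRel (g 0 * g 1) 0
  | orth₂ : ConifoldRel (g 1 * g 0) 0
  | idem₁ : ConifoldRel (g 0 * g 0) (g 0)
  | idem₂ : ConifoldRel (g 1 * g 1) (g 1)
  | path_x : ConifoldRel (g 2) (g 0 * g 2 * g 1)
  | path_z : ConifoldRel (g 4) (g 0 * g 4 * g 1)
  | path_y : ConifoldRel (g 3) (g 1 * g 3 * g 0)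
  | path_w : ConifoldRel (g 5) (g 1 * g 5 * g 0)
  | pot_w : ConifoldRel (g 2 * g 3 * g 4) (g 4 * g 3 * g 2)
  | pot_x : ConifoldRel (g 3 * g 4 * g 5) (g 5 * g 4 * g 3)
  | pot_y : ConifoldRel (g 4 * g 5 * g 2) (g 2 * g 5 * g 4)
  | pot_z : ConifoldRel (g 5 * g 2 * g 3) (g 3 * g 2 * g 5)

/-- The algebra `A₀`, the quotient of the free algebra on `e₁, e₂, x, y, z, w` by the
two-sided ideal generated by the above relations. -/
abbrev ConifoldAlg := RingQuot ConifoldRel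

/-- The generator `x` of `A₀`. -/
noncomputable def ax : ConifoldAlg := RingQuot.mkAlgHom ℂ ConifoldRel (g 2)

/-- The generator `y` of `A₀`. -/
noncomputable def ay : ConifoldAlg := RingQuot.mkAlgHom ℂ ConifoldRel (g 3)

/-- The generator `z` of `A₀`. -/
noncomputable def az : ConifoldAlg := RingQuot.mkAlgHom ℂ ConifoldRel (g 4)

/-- The generator `w` of `A₀`. -/
noncomputable def aw : ConifoldAlg := RingQuot.mkAlgHom ℂ ConifoldRel (g 5)

/-! Both summands of `W^punc` are cycles of the quiver, `xyzw` at `v₁` and `wzyx` at `v₂`, so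
`W^punc ∈ e₁A₀e₁ + e₂A₀e₂` commutes with the orthogonal idempotents `e₁, e₂`. For an arrow `a`,
one summand is killed by `a` on the left and the other on the right, because two parallel arrows
compose to zero; the two surviving words (for `a = x`: `xwzyx` and `xyzwx`) are identified by the
cyclic-derivative relations. An element commuting with all generators is central. -/

theorem FreeAlgebra.commute_of_surjective {R X A : Type*} [CommSemiring R] [Semiring A]
    [Algebra R A] {f : FreeAlgebra R X →ₐ[R] A} (hf : Function.Surjective f) {c : A}
    (hc : ∀ i, Commute c (f (ι R i))) (a : A) : Commute c a := by
  have hgen : Algebra.adjoin R (Set.range (f ∘ ι R)) = ⊤ := by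
    rw [Set.range_comp, Algebra.adjoin_image, adjoin_range_ι, Algebra.map_top,
      (AlgHom.range_eq_top f).2 hf]
  refine Algebra.commute_of_mem_adjoin_of_forall_mem_commute (hgen ▸ Algebra.mem_top) ?_
  rintro _ ⟨i, rfl⟩
  exact hc i

section Corner

variable {R : Type*} [Semiring R] {e f a b : R}

theorem IsIdempotentElem.mul_left_eq_of_eq_mul_mul (he : IsIdempotentElem e)
    (ha : a = e * a * f) : e * a = a := by
  rw [ha, ← mul_assoc, ← mul_assoc, he.eq]

theorem IsIdempotentElem.mul_right_eq_of_eq_mul_mul (hf : IsIdempotentElem f)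
    (ha : a = e * a * f) : a * f = a := by
  rw [ha, mul_assoc, hf.eq]

theorem mul_eq_zero_of_mul_eq_self (ha : a * f = a) (hb : e * b = b) (hfe : f * e = 0) :
    a * b = 0 := by
  rw [← ha, ← hb, mul_assoc, ← mul_assoc f, hfe, zero_mul, mul_zero]

theorem commute_mul_mul_add_mul_mul (he : IsIdempotentElem e) (hef : e * f = 0)
    (hfe : f * e = 0) (a b : R) : Commute e (e * a * e + f * b * f) := by
  have hcorner : e * (e * a * e) = e * a * e * e := by
    rw [← mul_assoc, ← mul_assoc, he.eq, mul_assoc _ e e, he.eq]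
  have hoff : e * (f * b * f) = f * b * f * e := by
    rw [← mul_assoc, ← mul_assoc, hef, mul_assoc _ f e, hfe, zero_mul, zero_mul, mul_zero]
  exact Commute.add_right hcorner hoff

end Corner

noncomputable def ae₁ : ConifoldAlg := RingQuot.mkAlgHom ℂ ConifoldRel (g 0)
noncomputable def ae₂ : ConifoldAlg := RingQuot.mkAlgHom ℂ ConifoldRel (g 1)

theorem ae₁_mul_ae₂ : ae₁ * ae₂ = 0 := by
  have h := RingQuot.mkAlgHom_rel ℂ ConifoldRel.orth₁
  simp only [map_mul, map_zero] at h
  exact h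

theorem ae₂_mul_ae₁ : ae₂ * ae₁ = 0 := by
  have h := RingQuot.mkAlgHom_rel ℂ ConifoldRel.orth₂
  simp only [map_mul, map_zero] at h
  exact h

theorem isIdempotentElem_ae₁ : IsIdempotentElem ae₁ := by
  have h := RingQuot.mkAlgHom_rel ℂ ConifoldRel.idem₁
  simp only [map_mul] at h
  exact h

theorem isIdempotentElem_ae₂ : IsIdempotentElem ae₂ := by
  have h := RingQuot.mkAlgHom_rel ℂ ConifoldRel.idem₂
  simp only [map_mul] at h
  exact h

theorem ax_eq_ae₁_mul_mul_ae₂ : ax = ae₁ * ax * ae₂ := by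
  have h := RingQuot.mkAlgHom_rel ℂ ConifoldRel.path_x
  simp only [map_mul] at h
  exact h

theorem az_eq_ae₁_mul_mul_ae₂ : az = ae₁ * az * ae₂ := by
  have h := RingQuot.mkAlgHom_rel ℂ ConifoldRel.path_z
  simp only [map_mul] at h
  exact h

theorem ay_eq_ae₂_mul_mul_ae₁ : ay = ae₂ * ay * ae₁ := by
  have h := RingQuot.mkAlgHom_rel ℂ ConifoldRel.path_y
  simp only [map_mul] at h
  exact h

theorem aw_eq_ae₂_mul_mul_ae₁ : aw = ae₂ * aw * ae₁ := by
  have h := RingQuot.mkAlgHom_rel ℂ ConifoldRel.path_w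
  simp only [map_mul] at h
  exact h

theorem ax_mul_ay_mul_az : ax * ay * az = az * ay * ax := by
  have h := RingQuot.mkAlgHom_rel ℂ ConifoldRel.pot_w
  simp only [map_mul] at h
  exact h

theorem ay_mul_az_mul_aw : ay * az * aw = aw * az * ay := by
  have h := RingQuot.mkAlgHom_rel ℂ ConifoldRel.pot_x
  simp only [map_mul] at h
  exact h

theorem az_mul_aw_mul_ax : az * aw * ax = ax * aw * az := by
  have h := RingQuot.mkAlgHom_rel ℂ ConifoldRel.pot_y
  simp only [map_mul] at h
  exact h

theorem aw_mul_ax_mul_ay : aw * ax * ay = ay * ax * aw := by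
  have h := RingQuot.mkAlgHom_rel ℂ ConifoldRel.pot_z
  simp only [map_mul] at h
  exact h

theorem ae₁_mul_ax : ae₁ * ax = ax :=
  isIdempotentElem_ae₁.mul_left_eq_of_eq_mul_mul ax_eq_ae₁_mul_mul_ae₂

theorem ax_mul_ae₂ : ax * ae₂ = ax :=
  isIdempotentElem_ae₂.mul_right_eq_of_eq_mul_mul ax_eq_ae₁_mul_mul_ae₂

theorem ae₁_mul_az : ae₁ * az = az :=
  isIdempotentElem_ae₁.mul_left_eq_of_eq_mul_mul az_eq_ae₁_mul_mul_ae₂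

theorem az_mul_ae₂ : az * ae₂ = az :=
  isIdempotentElem_ae₂.mul_right_eq_of_eq_mul_mul az_eq_ae₁_mul_mul_ae₂

theorem ae₂_mul_ay : ae₂ * ay = ay :=
  isIdempotentElem_ae₂.mul_left_eq_of_eq_mul_mul ay_eq_ae₂_mul_mul_ae₁

theorem ay_mul_ae₁ : ay * ae₁ = ay :=
  isIdempotentElem_ae₁.mul_right_eq_of_eq_mul_mul ay_eq_ae₂_mul_mul_ae₁

theorem ae₂_mul_aw : ae₂ * aw = aw :=
  isIdempotentElem_ae₂.mul_left_eq_of_eq_mul_mul aw_eq_ae₂_mul_mul_ae₁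

theorem aw_mul_ae₁ : aw * ae₁ = aw :=
  isIdempotentElem_ae₁.mul_right_eq_of_eq_mul_mul aw_eq_ae₂_mul_mul_ae₁

theorem ax_mul_ax : ax * ax = 0 :=
  mul_eq_zero_of_mul_eq_self ax_mul_ae₂ ae₁_mul_ax ae₂_mul_ae₁

theorem ax_mul_az : ax * az = 0 :=
  mul_eq_zero_of_mul_eq_self ax_mul_ae₂ ae₁_mul_az ae₂_mul_ae₁

theorem az_mul_ax : az * ax = 0 :=
  mul_eq_zero_of_mul_eq_self az_mul_ae₂ ae₁_mul_ax ae₂_mul_ae₁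

theorem ay_mul_aw : ay * aw = 0 :=
  mul_eq_zero_of_mul_eq_self ay_mul_ae₁ ae₂_mul_aw ae₁_mul_ae₂

theorem aw_mul_ay : aw * ay = 0 :=
  mul_eq_zero_of_mul_eq_self aw_mul_ae₁ ae₂_mul_ay ae₁_mul_ae₂

theorem aw_mul_aw : aw * aw = 0 :=
  mul_eq_zero_of_mul_eq_self aw_mul_ae₁ ae₂_mul_aw ae₁_mul_ae₂

noncomputable def wpunc : ConifoldAlg := ax * ay * az * aw + aw * az * ay * ax

theorem wpunc_eq_add :
    wpunc = ae₁ * (ax * ay * az * aw) * ae₁ + ae₂ * (aw * az * ay * ax) * ae₂ := by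
  simp only [wpunc, mul_assoc, aw_mul_ae₁, ax_mul_ae₂]
  rw [← mul_assoc ae₁, ae₁_mul_ax, ← mul_assoc ae₂, ae₂_mul_aw]

theorem commute_ae₁_wpunc : Commute ae₁ wpunc := by
  rw [wpunc_eq_add]
  exact commute_mul_mul_add_mul_mul isIdempotentElem_ae₁ ae₁_mul_ae₂ ae₂_mul_ae₁ _ _

theorem commute_ae₂_wpunc : Commute ae₂ wpunc := by
  rw [wpunc_eq_add, add_comm]
  exact commute_mul_mul_add_mul_mul isIdempotentElem_ae₂ ae₂_mul_ae₁ ae₁_mul_ae₂ _ _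

theorem commute_ax_wpunc : Commute ax wpunc :=
  calc ax * wpunc = ax * (aw * az * ay) * ax := by
        simp only [wpunc, mul_add, ← mul_assoc, ax_mul_ax, zero_mul, zero_add]
    _ = ax * (ay * az * aw) * ax := by rw [ay_mul_az_mul_aw]
    _ = wpunc * ax := by
        simp only [wpunc, add_mul, mul_assoc, ax_mul_ax, mul_zero, add_zero]

theorem commute_az_wpunc : Commute az wpunc :=
  calc az * wpunc = az * (aw * az * ay) * ax := by
        simp only [wpunc, mul_add, ← mul_assoc, az_mul_ax, zero_mul, zero_add]
    _ = az * ay * (az * aw * ax) := by rw [← ay_mul_az_mul_aw]; simp only [mul_assoc]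
    _ = az * ay * ax * aw * az := by rw [az_mul_aw_mul_ax]; simp only [mul_assoc]
    _ = wpunc * az := by
        rw [← ax_mul_ay_mul_az]
        simp only [wpunc, add_mul, mul_assoc, ax_mul_az, mul_zero, add_zero]

theorem commute_ay_wpunc : Commute ay wpunc :=
  calc ay * wpunc = ay * (ax * ay * az) * aw := by
        simp only [wpunc, mul_add, ← mul_assoc, ay_mul_aw, zero_mul, add_zero]
    _ = ay * az * (aw * ax * ay) := by
        rw [ax_mul_ay_mul_az, aw_mul_ax_mul_ay]; simp only [mul_assoc]
    _ = aw * az * ay * ax * ay := by rw [← ay_mul_az_mul_aw]; simp only [mul_assoc]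
    _ = wpunc * ay := by
        simp only [wpunc, add_mul, mul_assoc, aw_mul_ay, mul_zero, zero_add]

theorem commute_aw_wpunc : Commute aw wpunc :=
  calc aw * wpunc = aw * (ax * ay * az) * aw := by
        simp only [wpunc, mul_add, ← mul_assoc, aw_mul_aw, zero_mul, add_zero]
    _ = aw * (az * ay * ax) * aw := by rw [ax_mul_ay_mul_az]
    _ = wpunc * aw := by
        simp only [wpunc, add_mul, mul_assoc, aw_mul_aw, mul_zero, zero_add]

theorem commute_wpunc (r : ConifoldAlg) : Commute wpunc r := by
  refine FreeAlgebra.commute_of_surjective (RingQuot.mkAlgHom_surjective ℂ ConifoldRel)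
    (fun i ↦ ?_) r
  fin_cases i
  exacts [commute_ae₁_wpunc.symm, commute_ae₂_wpunc.symm, commute_ax_wpunc.symm,
    commute_ay_wpunc.symm, commute_az_wpunc.symm, commute_aw_wpunc.symm]

/-- the worldsheet superpotential `W^punc = xyzw + wzyx` of the
generalized mirror of the 4-punctured sphere is central in `A₀`. -/
theorem Wpunc_central (r : ConifoldAlg) :
    (ax * ay * az * aw + aw * az * ay * ax) * r
      = r * (ax * ay * az * aw + aw * az * ay * ax) :=
  commute_wpunc r
end

section
/- In the algebra A₀, the four elements α := yz, β := wz, γ := wx, δ := yx pairwise commute (αβ = βα, αγ = γα, αδ = δα, βγ = γβ, βδ = δβ, γδ = δγ), and moreover αγ = βδ. (These are the generating loops of the subalgebra e₂A₀e₂ based at the second vertex, which is thereby a commutative quotient of the coordinate ring ℂ[α,β,γ,δ]/(αγ − βδ) of the conifold.) -/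
open Complex

/-!
Each identity comes from rewriting a word of length four with the relations
`xyz = zyx`, `yzw = wzy`, `zwx = xwz`, `wxy = yxw` on subwords of length three; `αγ = γα`
and `βδ = δβ` pass through the word `wzyx = βδ`. Only associativity is used besides these.
-/

/-- The vanishing of the cyclic derivatives of `Φ₀ = xyzw − wzyx`. -/
structure CyclicDerivRelations {M : Type*} [Mul M] (x y z w : M) : Prop where
  xyz : x * y * z = z * y * x
  yzw : y * z * w = w * z * y
  zwx : z * w * x = x * w * z
  wxy : w * x * y = y * x * w

namespace CyclicDerivRelations

variable {M : Type*} [Semigroup M] {x y z w : M}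

theorem yz_mul_wx (h : CyclicDerivRelations x y z w) : y * z * (w * x) = w * z * (y * x) := by
  simp only [← mul_assoc, h.yzw]

theorem wz_mul_yx (h : CyclicDerivRelations x y z w) : w * z * (y * x) = w * x * (y * z) :=
  calc w * z * (y * x) = w * (z * y * x) := by simp only [mul_assoc]
    _ = w * (x * y * z) := by rw [h.xyz]
    _ = w * x * (y * z) := by simp only [mul_assoc]

theorem commute_yz_wz (h : CyclicDerivRelations x y z w) : Commute (y * z) (w * z) := by
  show y * z * (w * z) = w * z * (y * z)
  simp only [← mul_assoc, h.yzw]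

theorem commute_yz_wx (h : CyclicDerivRelations x y z w) : Commute (y * z) (w * x) :=
  h.yz_mul_wx.trans h.wz_mul_yx

theorem commute_yz_yx (h : CyclicDerivRelations x y z w) : Commute (y * z) (y * x) :=
  calc y * z * (y * x) = y * (z * y * x) := by simp only [mul_assoc]
    _ = y * (x * y * z) := by rw [h.xyz]
    _ = y * x * (y * z) := by simp only [mul_assoc]

theorem commute_wz_wx (h : CyclicDerivRelations x y z w) : Commute (w * z) (w * x) :=
  calc w * z * (w * x) = w * (z * w * x) := by simp only [mul_assoc]
    _ = w * (x * w * z) := by rw [h.zwx]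
    _ = w * x * (w * z) := by simp only [mul_assoc]

theorem commute_wz_yx (h : CyclicDerivRelations x y z w) : Commute (w * z) (y * x) := by
  show w * z * (y * x) = y * x * (w * z)
  rw [h.wz_mul_yx]
  simp only [← mul_assoc, h.wxy]

theorem commute_wx_yx (h : CyclicDerivRelations x y z w) : Commute (w * x) (y * x) := by
  show w * x * (y * x) = y * x * (w * x)
  simp only [← mul_assoc, h.wxy]

end CyclicDerivRelations

theorem cyclicDerivRelations_conifoldAlg : CyclicDerivRelations ax ay az aw where
  xyz := by simpa only [ax, ay, az, aw, map_mul] using RingQuot.mkAlgHom_rel ℂ ConifoldRel.pot_w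
  yzw := by simpa only [ax, ay, az, aw, map_mul] using RingQuot.mkAlgHom_rel ℂ ConifoldRel.pot_x
  zwx := by simpa only [ax, ay, az, aw, map_mul] using RingQuot.mkAlgHom_rel ℂ ConifoldRel.pot_y
  wxy := by simpa only [ax, ay, az, aw, map_mul] using RingQuot.mkAlgHom_rel ℂ ConifoldRel.pot_z

/-- in `A₀` the loops `α = yz`, `β = wz`, `γ = wx`, `δ = yx` based at
the second vertex pairwise commute, and `αγ = βδ`; hence the subalgebra `e₂A₀e₂` is
a commutative quotient of the conifold coordinate ring `ℂ[α,β,γ,δ]/(αγ − βδ)`. -/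
theorem conifold_loops_commute :
    (ay * az) * (aw * az) = (aw * az) * (ay * az) ∧
    (ay * az) * (aw * ax) = (aw * ax) * (ay * az) ∧
    (ay * az) * (ay * ax) = (ay * ax) * (ay * az) ∧
    (aw * az) * (aw * ax) = (aw * ax) * (aw * az) ∧
    (aw * az) * (ay * ax) = (ay * ax) * (aw * az) ∧
    (aw * ax) * (ay * ax) = (ay * ax) * (aw * ax) ∧
    (ay * az) * (aw * ax) = (aw * az) * (ay * ax) := by
  have h := cyclicDerivRelations_conifoldAlg
  exact ⟨h.commute_yz_wz.eq, h.commute_yz_wx.eq, h.commute_yz_yx.eq, h.commute_wz_wx.eq,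
    h.commute_wz_yx.eq, h.commute_wx_yx.eq, h.yz_mul_wx⟩
end
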